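/- The converse negation-left rule is admissible in cut-free lTS4: if the sequent Γ ⊢ Δ, ¬α is provable in cut-free lTS4, then α, Γ ⊢ Δ is provable in cut-free lTS4. -/

import Mathlib

inductive Fml : Type
  | var : ℕ → Fml
  | and : Fml → Fml → Fml
  | or  : Fml → Fml → Fml
  | imp : Fml → Fml → Fml
  | neg : Fml → Fml
  | box : Fml → Fml
  | dia : Fml → Fml
  deriving DecidableEq

open Fml

abbrev Ctx := Finset Fml

/-- □Γ -/
def boxS (Γ : Ctx) : Ctx := Γ.image Fml.box
/-- ◇Γ -/
def diaS (Γ : Ctx) : Ctx := Γ.image Fml.dia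
/-- ¬□Γ -/
def nboxS (Γ : Ctx) : Ctx := Γ.image (fun g => Fml.neg (Fml.box g))
/-- ¬◇Γ -/
def ndiaS (Γ : Ctx) : Ctx := Γ.image (fun g => Fml.neg (Fml.dia g))

/-- The twist sequent calculus lTS4; the Boolean index is `true` iff the cut rule is allowed.
    `lTS4 false` is the cut-free fragment. -/
inductive lTS4 : Bool → Ctx → Ctx → Prop
  | initV (c : Bool) (p : ℕ) : lTS4 c {var p} {var p}
  | initNV (c : Bool) (p : ℕ) : lTS4 c {neg (var p)} {neg (var p)}
  | initL (c : Bool) (p : ℕ) : lTS4 c {neg (var p), var p} ∅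
  | initR (c : Bool) (p : ℕ) : lTS4 c ∅ {neg (var p), var p}
  | cut (Γ Δ : Ctx) (α : Fml) :
      lTS4 true Γ {α} → lTS4 true (insert α Γ) Δ → lTS4 true Γ Δ
  | weL (c Γ Δ α) : lTS4 c Γ Δ → lTS4 c (insert α Γ) Δ
  | weR (c Γ Δ α) : lTS4 c Γ Δ → lTS4 c Γ (insert α Δ)
  | andL (c Γ Δ α β) : lTS4 c (insert α (insert β Γ)) Δ → lTS4 c (insert (α.and β) Γ) Δ
  | andR (c Γ Δ α β) : lTS4 c Γ (insert α Δ) → lTS4 c Γ (insert β Δ) →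
      lTS4 c Γ (insert (α.and β) Δ)
  | orL (c Γ Δ α β) : lTS4 c (insert α Γ) Δ → lTS4 c (insert β Γ) Δ →
      lTS4 c (insert (α.or β) Γ) Δ
  | orR (c Γ Δ α β) : lTS4 c Γ (insert α (insert β Δ)) → lTS4 c Γ (insert (α.or β) Δ)
  | impL (c Γ Δ α β) : lTS4 c Γ (insert α Δ) → lTS4 c (insert β Γ) Δ →
      lTS4 c (insert (α.imp β) Γ) Δ
  | impR (c Γ Δ α β) : lTS4 c (insert α Γ) (insert β Δ) → lTS4 c Γ (insert (α.imp β) Δ)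
  | boxL (c Γ Δ α) : lTS4 c (insert α Γ) Δ → lTS4 c (insert α.box Γ) Δ
  | boxR (c Γ₁ Γ₂ Δ₁ Δ₂ α) :
      lTS4 c (boxS Γ₁ ∪ ndiaS Γ₂) (insert α (diaS Δ₁ ∪ nboxS Δ₂)) →
      lTS4 c (boxS Γ₁ ∪ ndiaS Γ₂) (insert α.box (diaS Δ₁ ∪ nboxS Δ₂))
  | diaL (c Γ₁ Γ₂ Δ₁ Δ₂ α) :
      lTS4 c (insert α (boxS Γ₁ ∪ ndiaS Γ₂)) (diaS Δ₁ ∪ nboxS Δ₂) →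
      lTS4 c (insert α.dia (boxS Γ₁ ∪ ndiaS Γ₂)) (diaS Δ₁ ∪ nboxS Δ₂)
  | diaR (c Γ Δ α) : lTS4 c Γ (insert α Δ) → lTS4 c Γ (insert α.dia Δ)
  | nnL (c Γ Δ α) : lTS4 c (insert α Γ) Δ → lTS4 c (insert α.neg.neg Γ) Δ
  | nnR (c Γ Δ α) : lTS4 c Γ (insert α Δ) → lTS4 c Γ (insert α.neg.neg Δ)
  | nandL (c Γ Δ α β) : lTS4 c Γ (insert α Δ) → lTS4 c Γ (insert β Δ) →
      lTS4 c (insert (α.and β).neg Γ) Δ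
  | nandR (c Γ Δ α β) : lTS4 c (insert α (insert β Γ)) Δ → lTS4 c Γ (insert (α.and β).neg Δ)
  | norL (c Γ Δ α β) : lTS4 c Γ (insert α (insert β Δ)) → lTS4 c (insert (α.or β).neg Γ) Δ
  | norR (c Γ Δ α β) : lTS4 c (insert α Γ) Δ → lTS4 c (insert β Γ) Δ →
      lTS4 c Γ (insert (α.or β).neg Δ)
  | nimpL (c Γ Δ α β) : lTS4 c (insert α Γ) (insert β Δ) → lTS4 c (insert (α.imp β).neg Γ) Δ
  | nimpR (c Γ Δ α β) : lTS4 c Γ (insert α Δ) → lTS4 c (insert β Γ) Δ →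
      lTS4 c Γ (insert (α.imp β).neg Δ)
  | nboxL (c Γ₁ Γ₂ Δ₁ Δ₂ α) :
      lTS4 c (boxS Γ₁ ∪ ndiaS Γ₂) (insert α (diaS Δ₁ ∪ nboxS Δ₂)) →
      lTS4 c (insert α.box.neg (boxS Γ₁ ∪ ndiaS Γ₂)) (diaS Δ₁ ∪ nboxS Δ₂)
  | nboxR (c Γ Δ α) : lTS4 c (insert α Γ) Δ → lTS4 c Γ (insert α.box.neg Δ)
  | ndiaL (c Γ Δ α) : lTS4 c Γ (insert α Δ) → lTS4 c (insert α.dia.neg Γ) Δ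
  | ndiaR (c Γ₁ Γ₂ Δ₁ Δ₂ α) :
      lTS4 c (insert α (boxS Γ₁ ∪ ndiaS Γ₂)) (diaS Δ₁ ∪ nboxS Δ₂) →
      lTS4 c (boxS Γ₁ ∪ ndiaS Γ₂) (insert α.dia.neg (diaS Δ₁ ∪ nboxS Δ₂))

/-!
Strip every formula to its core (all leading negations removed) and record the side of the
sequent on which it effectively lies: `¬φ` on the right counts as `φ` on the left, and `¬¬φ` as
`φ`. Cut-free derivability depends only on this set of polarized cores, monotonically. By
induction on the derivation: the ordinary rule for `φ` and the twist rule for `¬φ` on the other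
side have the same polarized premises and conclusion, iterated `¬¬`-rules and weakening recover
the actual formulas of the target sequent, and for the context-restricted modal rules one extracts
from the target a purely modal sequent with the same polarization. Since `Γ ⊢ Δ, ¬α` and
`α, Γ ⊢ Δ` have the same polarization, the claim follows.
-/

namespace Fml

def core : Fml → Fml
  | neg a => a.core
  | x => x

def negParity : Fml → Bool
  | neg a => !a.negParity
  | _ => false

theorem exists_eq_iterate_neg (y : Fml) :
    ∃ k, y = neg^[2 * k] (cond y.negParity y.core.neg y.core) := by
  induction y with
  | neg a ih =>
    obtain ⟨k, hk⟩ := ih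
    cases h : a.negParity <;> simp only [h, negParity, core, Bool.not_false, Bool.not_true,
      cond_true, cond_false] at hk ⊢
    · refine ⟨k, ?_⟩
      conv_lhs => rw [hk]
      rw [← Function.iterate_succ_apply' neg, Function.iterate_succ_apply]
    · refine ⟨k + 1, ?_⟩
      conv_lhs => rw [hk]
      rw [show 2 * (k + 1) = 2 * k + 1 + 1 by ring, Function.iterate_succ_apply',
        Function.iterate_succ_apply]
  | _ => exact ⟨0, rfl⟩

end Fml

def MemUpToDoubleNeg (x : Fml) (Γ : Ctx) : Prop := ∃ k, neg^[2 * k] x ∈ Γ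

theorem MemUpToDoubleNeg.of_mem {x : Fml} {Γ : Ctx} (h : x ∈ Γ) : MemUpToDoubleNeg x Γ := ⟨0, h⟩

theorem MemUpToDoubleNeg.mono {x : Fml} {Γ Γ' : Ctx} (h : MemUpToDoubleNeg x Γ) (hΓ : Γ ⊆ Γ') :
    MemUpToDoubleNeg x Γ' :=
  h.imp fun _ hk => hΓ hk

theorem forall_memUpToDoubleNeg_insert {X Γ : Ctx} {y : Fml}
    (h : ∀ x ∈ X, MemUpToDoubleNeg x Γ) : ∀ x ∈ insert y X, MemUpToDoubleNeg x (insert y Γ) :=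
  (Finset.forall_mem_insert _ _ _).2 ⟨.of_mem (Finset.mem_insert_self _ _),
    fun x hx => (h x hx).mono (Finset.subset_insert _ _)⟩

/-- `(φ, false)` records that `φ` occurs on the left up to double negation, or `¬φ` on the
right; `(φ, true)` records the mirror image. -/
def polarize (Γ Δ : Ctx) : Finset (Fml × Bool) :=
  Γ.image (fun y => (y.core, y.negParity)) ∪ Δ.image (fun y => (y.core, !y.negParity))

theorem polarize_insert_left (x : Fml) (Γ Δ : Ctx) :
    polarize (insert x Γ) Δ = insert (x.core, x.negParity) (polarize Γ Δ) := by
  simp [polarize, Finset.insert_union]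

theorem polarize_insert_right (x : Fml) (Γ Δ : Ctx) :
    polarize Γ (insert x Δ) = insert (x.core, !x.negParity) (polarize Γ Δ) := by
  simp [polarize, Finset.union_insert]

theorem polarize_insert_left_subset_iff {x : Fml} {Γ Δ : Ctx} {P : Finset (Fml × Bool)} :
    polarize (insert x Γ) Δ ⊆ P ↔ (x.core, x.negParity) ∈ P ∧ polarize Γ Δ ⊆ P := by
  rw [polarize_insert_left, Finset.insert_subset_iff]

theorem polarize_insert_right_subset_iff {x : Fml} {Γ Δ : Ctx} {P : Finset (Fml × Bool)} :
    polarize Γ (insert x Δ) ⊆ P ↔ (x.core, !x.negParity) ∈ P ∧ polarize Γ Δ ⊆ P := by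
  rw [polarize_insert_right, Finset.insert_subset_iff]

theorem polarize_insert_left_mono {x : Fml} {Γ Δ Γ' Δ' : Ctx}
    (h : polarize Γ Δ ⊆ polarize Γ' Δ') : polarize (insert x Γ) Δ ⊆ polarize (insert x Γ') Δ' := by
  rw [polarize_insert_left, polarize_insert_left]
  exact Finset.insert_subset_insert _ h

theorem polarize_insert_right_mono {x : Fml} {Γ Δ Γ' Δ' : Ctx}
    (h : polarize Γ Δ ⊆ polarize Γ' Δ') : polarize Γ (insert x Δ) ⊆ polarize Γ' (insert x Δ') := by
  rw [polarize_insert_right, polarize_insert_right]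
  exact Finset.insert_subset_insert _ h

theorem polarize_insert_neg_neg_left (x : Fml) (Γ Δ : Ctx) :
    polarize (insert x.neg.neg Γ) Δ = polarize (insert x Γ) Δ := by
  simp only [polarize_insert_left, core, negParity, Bool.not_not]

theorem polarize_insert_neg_neg_right (x : Fml) (Γ Δ : Ctx) :
    polarize Γ (insert x.neg.neg Δ) = polarize Γ (insert x Δ) := by
  simp only [polarize_insert_right, core, negParity, Bool.not_not]

theorem polarize_insert_neg_right (x : Fml) (Γ Δ : Ctx) :
    polarize Γ (insert x.neg Δ) = polarize (insert x Γ) Δ := by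
  simp only [polarize_insert_left, polarize_insert_right, core, negParity, Bool.not_not]

theorem polarize_modal (Γ₁ Γ₂ Δ₁ Δ₂ : Ctx) :
    polarize (boxS Γ₁ ∪ ndiaS Γ₂) (diaS Δ₁ ∪ nboxS Δ₂) =
      (Γ₁ ∪ Δ₂).image (fun g => (box g, false)) ∪ (Γ₂ ∪ Δ₁).image (fun g => (dia g, true)) := by
  ext ⟨x, b⟩
  simp only [polarize, boxS, ndiaS, diaS, nboxS, Finset.image_union, Finset.image_image,
    Finset.mem_union]
  simp only [Function.comp_def, core, negParity, Finset.mem_image, Prod.mk.injEq]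
  simp only [Bool.not_false, Bool.not_true, or_comm, or_left_comm, or_assoc]

theorem mem_polarize_iff {x : Fml} {b : Bool} {Γ Δ : Ctx} :
    (x, b) ∈ polarize Γ Δ ↔
      (∃ y ∈ Γ, y.core = x ∧ y.negParity = b) ∨ (∃ y ∈ Δ, y.core = x ∧ (!y.negParity) = b) := by
  simp only [polarize, Finset.mem_union, Finset.mem_image, Prod.mk.injEq]

theorem memUpToDoubleNeg_or_of_mem_polarize {x : Fml} {b : Bool} {Γ Δ : Ctx}
    (h : (x, b) ∈ polarize Γ Δ) :
    MemUpToDoubleNeg (cond b x.neg x) Γ ∨ MemUpToDoubleNeg (cond b x x.neg) Δ := by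
  rcases mem_polarize_iff.1 h with ⟨y, hy, rfl, rfl⟩ | ⟨y, hy, rfl, rfl⟩
  · obtain ⟨k, hk⟩ := y.exists_eq_iterate_neg
    exact Or.inl ⟨k, hk ▸ hy⟩
  · obtain ⟨k, hk⟩ := y.exists_eq_iterate_neg
    exact Or.inr ⟨k, by rw [Bool.cond_not]; exact hk ▸ hy⟩

namespace lTS4

variable {c : Bool} {Γ Δ Γ' Δ' : Ctx}

theorem weaken (h : lTS4 c Γ Δ) (hΓ : Γ ⊆ Γ') (hΔ : Δ ⊆ Δ') : lTS4 c Γ' Δ' := by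
  have left : ∀ S : Ctx, lTS4 c (S ∪ Γ) Δ := fun S => by
    induction S using Finset.induction_on with
    | empty => simpa using h
    | insert _ _ _ ih => rw [Finset.insert_union]; exact weL _ _ _ _ ih
  have both : ∀ S : Ctx, lTS4 c Γ' (S ∪ Δ) := fun S => by
    induction S using Finset.induction_on with
    | empty => simpa [Finset.union_eq_left.2 hΓ] using left Γ'
    | insert _ _ _ ih => rw [Finset.insert_union]; exact weR _ _ _ _ ih
  simpa [Finset.union_eq_left.2 hΔ] using both Δ'

theorem absorb_left {x : Fml} (hx : MemUpToDoubleNeg x Γ) (h : lTS4 c (insert x Γ) Δ) :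
    lTS4 c Γ Δ := by
  obtain ⟨k, hk⟩ := hx
  suffices lTS4 c (insert (neg^[2 * k] x) Γ) Δ by rwa [Finset.insert_eq_of_mem hk] at this
  clear hk
  induction k with
  | zero => exact h
  | succ k ih =>
    rw [show 2 * (k + 1) = 2 * k + 1 + 1 by ring, Function.iterate_succ_apply',
      Function.iterate_succ_apply']
    exact nnL _ _ _ _ ih

theorem absorb_right {x : Fml} (hx : MemUpToDoubleNeg x Δ) (h : lTS4 c Γ (insert x Δ)) :
    lTS4 c Γ Δ := by
  obtain ⟨k, hk⟩ := hx
  suffices lTS4 c Γ (insert (neg^[2 * k] x) Δ) by rwa [Finset.insert_eq_of_mem hk] at this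
  clear hk
  induction k with
  | zero => exact h
  | succ k ih =>
    rw [show 2 * (k + 1) = 2 * k + 1 + 1 by ring, Function.iterate_succ_apply',
      Function.iterate_succ_apply']
    exact nnR _ _ _ _ ih

theorem absorb_left_union {S : Ctx} (hS : ∀ x ∈ S, MemUpToDoubleNeg x Γ)
    (h : lTS4 c (S ∪ Γ) Δ) : lTS4 c Γ Δ := by
  induction S using Finset.induction_on with
  | empty => simpa using h
  | insert x S _ ih =>
    rw [Finset.forall_mem_insert] at hS
    rw [Finset.insert_union] at h
    exact ih hS.2 (absorb_left (hS.1.mono Finset.subset_union_right) h)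

theorem absorb_right_union {S : Ctx} (hS : ∀ y ∈ S, MemUpToDoubleNeg y Δ)
    (h : lTS4 c Γ (S ∪ Δ)) : lTS4 c Γ Δ := by
  induction S using Finset.induction_on with
  | empty => simpa using h
  | insert y S _ ih =>
    rw [Finset.forall_mem_insert] at hS
    rw [Finset.insert_union] at h
    exact ih hS.2 (absorb_right (hS.1.mono Finset.subset_union_right) h)

theorem of_forall_memUpToDoubleNeg {X Y : Ctx} (h : lTS4 c X Y)
    (hX : ∀ x ∈ X, MemUpToDoubleNeg x Γ) (hY : ∀ y ∈ Y, MemUpToDoubleNeg y Δ) : lTS4 c Γ Δ :=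
  absorb_left_union hX <| absorb_right_union hY <|
    h.weaken Finset.subset_union_left Finset.subset_union_left

theorem of_mem_polarize {x : Fml} {b : Bool} (hx : (x, b) ∈ polarize Γ Δ)
    (hL : lTS4 c (insert (cond b x.neg x) Γ) Δ) (hR : lTS4 c Γ (insert (cond b x x.neg) Δ)) :
    lTS4 c Γ Δ :=
  (memUpToDoubleNeg_or_of_mem_polarize hx).elim (absorb_left · hL) (absorb_right · hR)

theorem of_var_mem_polarize {p : ℕ} (hL : (var p, false) ∈ polarize Γ Δ)
    (hR : (var p, true) ∈ polarize Γ Δ) : lTS4 c Γ Δ := by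
  -- each of the four ways of realizing `p` on both sides is closed by one initial sequent
  refine of_mem_polarize hL (of_mem_polarize (x := var p) (b := true) ?_ ?_ ?_)
    (of_mem_polarize (x := var p) (b := true) ?_ ?_ ?_)
  · exact polarize_insert_left (var p) Γ Δ ▸ Finset.mem_insert_of_mem hR
  · exact (initL c p).weaken (by simp [Finset.insert_subset_iff]) (Finset.empty_subset _)
  · exact (initV c p).weaken (by simp) (by simp)
  · exact polarize_insert_right (var p).neg Γ Δ ▸ Finset.mem_insert_of_mem hR
  · exact (initNV c p).weaken (by simp) (by simp)
  · exact (initR c p).weaken (Finset.empty_subset _) (by simp [Finset.insert_subset_iff])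

end lTS4

/-- The modal rules need a purely modal context: each `□g` of the premise is realized as `□g` on
the left or as `¬□g` on the right, whichever the target contains, and dually for `◇g`. -/
theorem exists_modal_polarize_eq {Γ₁ Γ₂ Δ₁ Δ₂ Γ Δ : Ctx}
    (hsub : polarize (boxS Γ₁ ∪ ndiaS Γ₂) (diaS Δ₁ ∪ nboxS Δ₂) ⊆ polarize Γ Δ) :
    ∃ A B E F : Ctx,
      polarize (boxS A ∪ ndiaS B) (diaS E ∪ nboxS F) =
        polarize (boxS Γ₁ ∪ ndiaS Γ₂) (diaS Δ₁ ∪ nboxS Δ₂) ∧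
      (∀ x ∈ boxS A ∪ ndiaS B, MemUpToDoubleNeg x Γ) ∧
      (∀ y ∈ diaS E ∪ nboxS F, MemUpToDoubleNeg y Δ) := by
  classical
  let boxLeft g := MemUpToDoubleNeg (box g) Γ
  let diaLeft g := MemUpToDoubleNeg (dia g).neg Γ
  refine ⟨(Γ₁ ∪ Δ₂).filter boxLeft, (Γ₂ ∪ Δ₁).filter diaLeft, (Γ₂ ∪ Δ₁).filter (¬diaLeft ·),
    (Γ₁ ∪ Δ₂).filter (¬boxLeft ·), ?_, ?_, ?_⟩
  · rw [polarize_modal, polarize_modal, Finset.filter_union_filter_not_eq,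
      Finset.filter_union_filter_not_eq]
  · simp only [boxS, ndiaS, Finset.forall_mem_union, Finset.forall_mem_image, Finset.mem_filter]
    exact ⟨fun _ hg => hg.2, fun _ hg => hg.2⟩
  · simp only [diaS, nboxS, Finset.forall_mem_union, Finset.forall_mem_image, Finset.mem_filter]
    refine ⟨fun g hg => ?_, fun g hg => ?_⟩
    · have hmem : (dia g, true) ∈ polarize Γ Δ := by
        apply hsub
        rw [polarize_modal]
        simpa [or_comm] using hg.1
      exact (memUpToDoubleNeg_or_of_mem_polarize hmem).resolve_left hg.2
    · have hmem : (box g, false) ∈ polarize Γ Δ := by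
        apply hsub
        rw [polarize_modal]
        simpa [or_comm] using hg.1
      exact (memUpToDoubleNeg_or_of_mem_polarize hmem).resolve_left hg.2

namespace lTS4

variable {c : Bool} {Γ Δ Γ₁ Γ₂ Δ₁ Δ₂ : Ctx} {α : Fml}

theorem of_box_mem_polarize
    (ih : ∀ {X Y : Ctx}, polarize (boxS Γ₁ ∪ ndiaS Γ₂) (insert α (diaS Δ₁ ∪ nboxS Δ₂)) ⊆
      polarize X Y → lTS4 c X Y)
    (hsub : polarize (boxS Γ₁ ∪ ndiaS Γ₂) (diaS Δ₁ ∪ nboxS Δ₂) ⊆ polarize Γ Δ)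
    (hα : (α.box, true) ∈ polarize Γ Δ) : lTS4 c Γ Δ := by
  obtain ⟨A, B, E, F, heq, hA, hE⟩ := exists_modal_polarize_eq hsub
  have prem : lTS4 c (boxS A ∪ ndiaS B) (insert α (diaS E ∪ nboxS F)) :=
    ih (by rw [polarize_insert_right, polarize_insert_right, heq])
  exact of_mem_polarize hα
    ((nboxL _ _ _ _ _ _ prem).of_forall_memUpToDoubleNeg (forall_memUpToDoubleNeg_insert hA) hE)
    ((boxR _ _ _ _ _ _ prem).of_forall_memUpToDoubleNeg hA (forall_memUpToDoubleNeg_insert hE))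

theorem of_dia_mem_polarize
    (ih : ∀ {X Y : Ctx}, polarize (insert α (boxS Γ₁ ∪ ndiaS Γ₂)) (diaS Δ₁ ∪ nboxS Δ₂) ⊆
      polarize X Y → lTS4 c X Y)
    (hsub : polarize (boxS Γ₁ ∪ ndiaS Γ₂) (diaS Δ₁ ∪ nboxS Δ₂) ⊆ polarize Γ Δ)
    (hα : (α.dia, false) ∈ polarize Γ Δ) : lTS4 c Γ Δ := by
  obtain ⟨A, B, E, F, heq, hA, hE⟩ := exists_modal_polarize_eq hsub
  have prem : lTS4 c (insert α (boxS A ∪ ndiaS B)) (diaS E ∪ nboxS F) :=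
    ih (by rw [polarize_insert_left, polarize_insert_left, heq])
  exact of_mem_polarize hα
    ((diaL _ _ _ _ _ _ prem).of_forall_memUpToDoubleNeg (forall_memUpToDoubleNeg_insert hA) hE)
    ((ndiaR _ _ _ _ _ _ prem).of_forall_memUpToDoubleNeg hA (forall_memUpToDoubleNeg_insert hE))

end lTS4

theorem lTS4.of_polarize_subset {Γ Δ Γ' Δ' : Ctx} (h : lTS4 false Γ Δ)
    (hsub : polarize Γ Δ ⊆ polarize Γ' Δ') : lTS4 false Γ' Δ' := by
  generalize hc : false = c at h
  induction h generalizing Γ' Δ' with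
  | initV _ p | initNV _ p | initL _ p | initR _ p =>
    exact lTS4.of_var_mem_polarize (p := p) (hsub (by simp [polarize, core, negParity]))
      (hsub (by simp [polarize, core, negParity]))
  | cut => cases hc
  | weL _ _ _ _ _ ih => exact ih (polarize_insert_left_subset_iff.1 hsub).2 hc
  | weR _ _ _ _ _ ih => exact ih (polarize_insert_right_subset_iff.1 hsub).2 hc
  | nnL _ _ _ a _ ih => exact ih (polarize_insert_neg_neg_left a _ _ ▸ hsub) hc
  | nnR _ _ _ a _ ih => exact ih (polarize_insert_neg_neg_right a _ _ ▸ hsub) hc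
  | andL _ _ _ _ _ _ ih | nandR _ _ _ _ _ _ ih =>
    simp only [polarize_insert_left_subset_iff, polarize_insert_right_subset_iff] at hsub
    have key := ih (polarize_insert_left_mono (polarize_insert_left_mono hsub.2)) hc
    exact lTS4.of_mem_polarize hsub.1 (.andL _ _ _ _ _ key) (.nandR _ _ _ _ _ key)
  | andR _ _ _ _ _ _ _ ih₁ ih₂ | nandL _ _ _ _ _ _ _ ih₁ ih₂ =>
    simp only [polarize_insert_left_subset_iff, polarize_insert_right_subset_iff] at hsub
    have key₁ := ih₁ (polarize_insert_right_mono hsub.2) hc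
    have key₂ := ih₂ (polarize_insert_right_mono hsub.2) hc
    exact lTS4.of_mem_polarize hsub.1 (.nandL _ _ _ _ _ key₁ key₂) (.andR _ _ _ _ _ key₁ key₂)
  | orL _ _ _ _ _ _ _ ih₁ ih₂ | norR _ _ _ _ _ _ _ ih₁ ih₂ =>
    simp only [polarize_insert_left_subset_iff, polarize_insert_right_subset_iff] at hsub
    have key₁ := ih₁ (polarize_insert_left_mono hsub.2) hc
    have key₂ := ih₂ (polarize_insert_left_mono hsub.2) hc
    exact lTS4.of_mem_polarize hsub.1 (.orL _ _ _ _ _ key₁ key₂) (.norR _ _ _ _ _ key₁ key₂)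
  | orR _ _ _ _ _ _ ih | norL _ _ _ _ _ _ ih =>
    simp only [polarize_insert_left_subset_iff, polarize_insert_right_subset_iff] at hsub
    have key := ih (polarize_insert_right_mono (polarize_insert_right_mono hsub.2)) hc
    exact lTS4.of_mem_polarize hsub.1 (.norL _ _ _ _ _ key) (.orR _ _ _ _ _ key)
  | impL _ _ _ _ _ _ _ ih₁ ih₂ | nimpR _ _ _ _ _ _ _ ih₁ ih₂ =>
    simp only [polarize_insert_left_subset_iff, polarize_insert_right_subset_iff] at hsub
    have key₁ := ih₁ (polarize_insert_right_mono hsub.2) hc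
    have key₂ := ih₂ (polarize_insert_left_mono hsub.2) hc
    exact lTS4.of_mem_polarize hsub.1 (.impL _ _ _ _ _ key₁ key₂) (.nimpR _ _ _ _ _ key₁ key₂)
  | impR _ _ _ _ _ _ ih | nimpL _ _ _ _ _ _ ih =>
    simp only [polarize_insert_left_subset_iff, polarize_insert_right_subset_iff] at hsub
    have key := ih (polarize_insert_left_mono (polarize_insert_right_mono hsub.2)) hc
    exact lTS4.of_mem_polarize hsub.1 (.nimpL _ _ _ _ _ key) (.impR _ _ _ _ _ key)
  | boxL _ _ _ _ _ ih | nboxR _ _ _ _ _ ih =>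
    simp only [polarize_insert_left_subset_iff, polarize_insert_right_subset_iff] at hsub
    have key := ih (polarize_insert_left_mono hsub.2) hc
    exact lTS4.of_mem_polarize hsub.1 (.boxL _ _ _ _ key) (.nboxR _ _ _ _ key)
  | diaR _ _ _ _ _ ih | ndiaL _ _ _ _ _ ih =>
    simp only [polarize_insert_left_subset_iff, polarize_insert_right_subset_iff] at hsub
    have key := ih (polarize_insert_right_mono hsub.2) hc
    exact lTS4.of_mem_polarize hsub.1 (.ndiaL _ _ _ _ key) (.diaR _ _ _ _ key)
  | boxR _ _ _ _ _ _ _ ih | nboxL _ _ _ _ _ _ _ ih =>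
    simp only [polarize_insert_left_subset_iff, polarize_insert_right_subset_iff] at hsub
    exact lTS4.of_box_mem_polarize (ih · hc) hsub.2 hsub.1
  | diaL _ _ _ _ _ _ _ ih | ndiaR _ _ _ _ _ _ _ ih =>
    simp only [polarize_insert_left_subset_iff, polarize_insert_right_subset_iff] at hsub
    exact lTS4.of_dia_mem_polarize (ih · hc) hsub.2 hsub.1

/-- (¬left⁻¹) is admissible in cut-free lTS4. -/
theorem stmt5 (Γ Δ : Ctx) (α : Fml) (h : lTS4 false Γ (insert α.neg Δ)) :
    lTS4 false (insert α Γ) Δ :=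
  h.of_polarize_subset (polarize_insert_neg_right α Γ Δ).subset
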